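/- arXiv:2306.05815 — 2 statements merged into one kernel-verified Lean document; each statement's English description precedes it below -/
import Mathlib

section
/- Let G ∈ ℝ^{n×n} be symmetric positive semidefinite, let s ≤ n, let u₁,…,uₛ ∈ ℝⁿ be orthonormal eigenvectors of G with G uⱼ = λⱼ uⱼ and λⱼ ≥ 0, and let H ∈ ℝ^{n×s} be the matrix whose j-th column is √(λⱼ) uⱼ. Then (1/2) Tr(Hᵀ H) − Tr √(Hᵀ G H) = −(1/2) Σ_{j=1}^s λⱼ. -/
/-!
Let `U` be the matrix with columns `uⱼ`, `Λ = diag λ` and `D = diag √λ`, so that `H = U D`,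
`Uᵀ U = 1` and `G U = U Λ`. Then `Hᵀ H = D² = Λ` and `Hᵀ G H = D Λ D = Λ²`; since `Λ` is positive
semidefinite, uniqueness of positive semidefinite square roots gives `√(Hᵀ G H) = Λ`, and both
traces equal `Σⱼ λⱼ`.
-/

open scoped Matrix

lemma transposeMulMul_posSemidef {n s : ℕ} {G : Matrix (Fin n) (Fin n) ℝ}
    (hG : G.PosSemidef) (H : Matrix (Fin n) (Fin s) ℝ) : (Hᵀ * G * H).PosSemidef := by
  simpa [Matrix.conjTranspose_eq_transpose_of_trivial] using hG.conjTranspose_mul_mul_same H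

section

open scoped ComplexOrder

/-- The positive semidefinite square root of a positive semidefinite matrix, as `Matrix.PosSemidef.sqrt`
was defined in Mathlib (December 2024); that definition has since been removed. -/
noncomputable def Matrix.PosSemidef.sqrt {n 𝕜 : Type*} [Fintype n] [DecidableEq n] [RCLike 𝕜]
    {A : Matrix n n 𝕜} (hA : A.PosSemidef) : Matrix n n 𝕜 :=
  hA.1.eigenvectorUnitary.1 * Matrix.diagonal ((↑) ∘ (√·) ∘ hA.1.eigenvalues) *
    (star hA.1.eigenvectorUnitary : Matrix n n 𝕜)

end

namespace Matrix

section Sqrt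

open scoped MatrixOrder ComplexOrder

variable {n 𝕜 : Type*} [Fintype n] [DecidableEq n] [RCLike 𝕜]

theorem PosSemidef.sqrt_eq_cfcSqrt {A : Matrix n n 𝕜} (hA : A.PosSemidef) :
    hA.sqrt = CFC.sqrt A := by
  rw [CFC.sqrt_eq_real_sqrt A hA.nonneg, cfcₙ_eq_cfc, hA.1.cfc_eq, IsHermitian.cfc,
    Unitary.conjStarAlgAut_apply]
  rfl

theorem PosSemidef.sqrt_eq_of_mul_self_eq {A B : Matrix n n 𝕜} (hA : A.PosSemidef)
    (hB : B.PosSemidef) (hBA : B * B = A) : hA.sqrt = B := by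
  rw [hA.sqrt_eq_cfcSqrt]
  exact CFC.sqrt_unique hBA hB.nonneg

end Sqrt

variable {m n R : Type*} [Fintype n] [CommSemiring R] [DecidableEq m]

theorem mul_transpose_eq_one_of_orthonormal_rows {M : Matrix m n R}
    (horth : ∀ j k, M j ⬝ᵥ M k = if j = k then 1 else 0) : M * Mᵀ = 1 := by
  ext j k
  exact (mul_apply' ..).trans (horth j k)

theorem mul_transpose_eq_transpose_mul_diagonal_of_mulVec_eq_smul [Fintype m]
    {G : Matrix n n R} {M : Matrix m n R} {lam : m → R} (heig : ∀ j, G *ᵥ M j = lam j • M j) :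
    G * Mᵀ = Mᵀ * diagonal lam := by
  ext i j
  rw [mul_diagonal]
  simpa [mul_comm, mul_apply, mulVec, dotProduct] using congrFun (heig j) i

end Matrix

open Matrix in
theorem dual_objective_at_svd_general {n s : ℕ}
    {G : Matrix (Fin n) (Fin n) ℝ} (hG : G.PosSemidef)
    (u : Fin s → (Fin n → ℝ)) (lam : Fin s → ℝ)
    (horth : ∀ j k : Fin s, u j ⬝ᵥ u k = if j = k then (1 : ℝ) else 0)
    (heig : ∀ j : Fin s, G *ᵥ u j = lam j • u j)
    (hnn : ∀ j : Fin s, 0 ≤ lam j)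
    (H : Matrix (Fin n) (Fin s) ℝ)
    (hH : H = Matrix.of fun i j => Real.sqrt (lam j) * u j i) :
    (1 / 2) * (Hᵀ * H).trace - (transposeMulMul_posSemidef hG H).sqrt.trace
      = -(1 / 2) * ∑ j : Fin s, lam j := by
  set D := diagonal fun j => √(lam j)
  have hHUD : H = (of u)ᵀ * D := by
    ext i j
    simp [hH, D, mul_diagonal, mul_comm]
  have hDD : D * D = diagonal lam := by
    simp [D, diagonal_mul_diagonal, Real.mul_self_sqrt (hnn _)]
  have hUU : of u * (of u)ᵀ = 1 := mul_transpose_eq_one_of_orthonormal_rows horth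
  have hGU : G * (of u)ᵀ = (of u)ᵀ * diagonal lam :=
    mul_transpose_eq_transpose_mul_diagonal_of_mulVec_eq_smul heig
  have hHH : Hᵀ * H = diagonal lam := by
    rw [hHUD, transpose_mul, transpose_transpose, diagonal_transpose, Matrix.mul_assoc,
      ← Matrix.mul_assoc (of u), hUU, Matrix.one_mul, hDD]
  have hHGH : Hᵀ * G * H = diagonal lam * diagonal lam :=
    calc Hᵀ * G * H = D * (of u * (G * (of u)ᵀ)) * D := by
          simp only [hHUD, transpose_mul, transpose_transpose, D, diagonal_transpose,
            Matrix.mul_assoc]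
      _ = D * diagonal lam * D := by rw [hGU, ← Matrix.mul_assoc (of u), hUU, Matrix.one_mul]
      _ = diagonal lam * diagonal lam := by
          rw [Matrix.mul_assoc, (commute_diagonal lam _).eq, ← Matrix.mul_assoc, hDD]
  have hsqrt : (transposeMulMul_posSemidef hG H).sqrt = diagonal lam :=
    PosSemidef.sqrt_eq_of_mul_self_eq _ (posSemidef_diagonal_iff.mpr hnn) hHGH.symm
  rw [hHH, hsqrt, trace_diagonal]
  ring

/-- If the columns of `H` are `√λⱼ uⱼ` for orthonormal eigenvectors `uⱼ` of `G` with
nonnegative eigenvalues `λⱼ`, then the dual KPCA objective at `H` equals `-(1/2) Σⱼ λⱼ`. -/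
theorem dual_objective_at_svd {n s : ℕ} (hs : s ≤ n)
    {G : Matrix (Fin n) (Fin n) ℝ} (hG : G.PosSemidef)
    (u : Fin s → (Fin n → ℝ)) (lam : Fin s → ℝ)
    (horth : ∀ j k : Fin s, u j ⬝ᵥ u k = if j = k then (1 : ℝ) else 0)
    (heig : ∀ j : Fin s, G *ᵥ u j = lam j • u j)
    (hnn : ∀ j : Fin s, 0 ≤ lam j)
    (H : Matrix (Fin n) (Fin s) ℝ)
    (hH : H = Matrix.of fun i j => Real.sqrt (lam j) * u j i) :
    (1 / 2) * (Hᵀ * H).trace - (transposeMulMul_posSemidef hG H).sqrt.trace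
      = -(1 / 2) * ∑ j : Fin s, lam j :=
  dual_objective_at_svd_general hG u lam horth heig hnn H hH
end

section
/- Let 𝓗 be a real Hilbert space, v₁,…,vₙ ∈ 𝓗 with positive definite Gram matrix G ∈ ℝ^{n×n}, G_{ij} = ⟨vᵢ, vⱼ⟩, and let Γ : 𝓗ˢ → ℝ^{n×s} be the operator (ΓW)_{ij} = ⟨vᵢ, wⱼ⟩. Let Ψ : ℝ^{n×s} → ℝ ∪ {+∞} be proper, convex and lower semicontinuous, and let f = (1/2)‖·‖_F² □ Ψ be its Moreau envelope, f(Y) = inf_Z ( (1/2)‖Y − Z‖_F² + Ψ(Z) ). Then the following equality holds in the extended reals: inf over W ∈ 𝓗ˢ with 𝒢(W) ⪯ I_s of ( −f(ΓW) ) equals inf over H ∈ ℝ^{n×s} of ( (1/2)‖H‖_F² + Ψ⋆(H) − Tr √(Hᵀ G H) ), where Ψ⋆ is the Fenchel conjugate of Ψ. -/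
open scoped RealInnerProductSpace Matrix MatrixOrder

noncomputable def gram {𝓗 : Type*} [NormedAddCommGroup 𝓗] [InnerProductSpace ℝ 𝓗]
    {s : ℕ} (W : Fin s → 𝓗) : Matrix (Fin s) (Fin s) ℝ :=
  Matrix.of fun i j => ⟪W i, W j⟫

def frobInner {n s : ℕ} (A B : Matrix (Fin n) (Fin s) ℝ) : ℝ := (Aᵀ * B).trace

noncomputable def moreau {n s : ℕ} (Ψ : Matrix (Fin n) (Fin s) ℝ → EReal)
    (Y : Matrix (Fin n) (Fin s) ℝ) : EReal :=
  ⨅ Z : Matrix (Fin n) (Fin s) ℝ,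
    (((1 / 2) * frobInner (Y - Z) (Y - Z) : ℝ) : EReal) + Ψ Z

noncomputable def fenchelConj {n s : ℕ} (Ψ : Matrix (Fin n) (Fin s) ℝ → EReal)
    (H : Matrix (Fin n) (Fin s) ℝ) : EReal :=
  ⨆ Y : Matrix (Fin n) (Fin s) ℝ, ((frobInner H Y : ℝ) : EReal) - Ψ Y

section Pairing

open Matrix

variable {E : Type*} [NormedAddCommGroup E] [InnerProductSpace ℝ E] {ι κ μ : Type*}

def innerMatrix (u : κ → E) (w : ι → E) : Matrix κ ι ℝ := of fun k j => ⟪u k, w j⟫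

def rowCombination [Fintype ι] (A : Matrix κ ι ℝ) (u : ι → E) : κ → E :=
  fun k => ∑ j, A k j • u j

lemma innerMatrix_rowCombination {ι' : Type*} [Fintype ι] [Fintype ι'] (A : Matrix κ ι ℝ)
    (B : Matrix μ ι' ℝ) (u : ι → E) (w : ι' → E) :
    innerMatrix (rowCombination A u) (rowCombination B w) = A * innerMatrix u w * Bᵀ := by
  ext k l
  simp only [innerMatrix, rowCombination, of_apply, mul_apply, transpose_apply, sum_inner,
    inner_sum, real_inner_smul_left, real_inner_smul_right, Finset.sum_mul]
  exact Finset.sum_congr rfl fun _ _ => Finset.sum_congr rfl fun _ _ => by ring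

lemma rowCombination_rowCombination [Fintype ι] [Fintype μ] (A : Matrix κ μ ℝ)
    (B : Matrix μ ι ℝ) (u : ι → E) :
    rowCombination A (rowCombination B u) = rowCombination (A * B) u := by
  ext k
  simp only [rowCombination, mul_apply, Finset.smul_sum, Finset.sum_smul, smul_smul]
  exact Finset.sum_comm

lemma rowCombination_one [Fintype ι] [DecidableEq ι] (u : ι → E) :
    rowCombination (1 : Matrix ι ι ℝ) u = u := by
  ext k
  simp [rowCombination, one_apply]

lemma gram_rowCombination [Fintype ι] (A : Matrix κ ι ℝ) (u : ι → E) :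
    gram ℝ (rowCombination A u) = A * gram ℝ u * Aᵀ :=
  innerMatrix_rowCombination A A u u

lemma trace_innerMatrix_rowCombination [Fintype ι] [Fintype κ] [DecidableEq ι]
    {A : Matrix κ ι ℝ} (hA : Aᵀ * A = 1) (u w : ι → E) :
    (innerMatrix (rowCombination A u) (rowCombination A w)).trace = (innerMatrix u w).trace := by
  rw [innerMatrix_rowCombination, trace_mul_cycle, hA, one_mul]

lemma posSemidef_one_sub_gram_rowCombination [Fintype ι] [Fintype κ] [DecidableEq ι]
    [DecidableEq κ] {A : Matrix κ ι ℝ} (hA : A * Aᵀ = 1) {w : ι → E}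
    (hw : (1 - gram ℝ w).PosSemidef) : (1 - gram ℝ (rowCombination A w)).PosSemidef := by
  have := hw.mul_mul_conjTranspose_same A
  rwa [conjTranspose_eq_transpose_of_trivial, Matrix.mul_sub, Matrix.sub_mul, Matrix.mul_one, hA,
    ← gram_rowCombination] at this

section Values

variable [Fintype ι] [DecidableEq ι]

def pairingValues (u : ι → E) : Set ℝ :=
  {x | ∃ w : ι → E, (1 - gram ℝ w).PosSemidef ∧ (innerMatrix u w).trace = x}

lemma pairingValues_subset_rowCombination {A : Matrix ι ι ℝ} (hA : A ∈ unitaryGroup ι ℝ)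
    (u : ι → E) : pairingValues u ⊆ pairingValues (rowCombination A u) := by
  rintro _ ⟨w, hw, rfl⟩
  rw [mem_unitaryGroup_iff, star_eq_conjTranspose, conjTranspose_eq_transpose_of_trivial] at hA
  exact ⟨rowCombination A w, posSemidef_one_sub_gram_rowCombination hA hw,
    trace_innerMatrix_rowCombination (mul_eq_one_comm.mp hA) u w⟩

lemma pairingValues_rowCombination {A : Matrix ι ι ℝ} (hA : A ∈ unitaryGroup ι ℝ) (u : ι → E) :
    pairingValues (rowCombination A u) = pairingValues u := by
  refine Set.Subset.antisymm ?_ (pairingValues_subset_rowCombination hA u)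
  simpa [rowCombination_rowCombination, mem_unitaryGroup_iff'.mp hA, rowCombination_one] using
    pairingValues_subset_rowCombination (Unitary.star_mem hA) (rowCombination A u)

lemma le_sum_norm_of_mem_pairingValues {u : ι → E} {x : ℝ} (hx : x ∈ pairingValues u) :
    x ≤ ∑ k, ‖u k‖ := by
  obtain ⟨w, hw, rfl⟩ := hx
  refine Finset.sum_le_sum fun k _ => ?_
  have hwk : ‖w k‖ ≤ 1 := by
    have := hw.diag_nonneg (i := k)
    rw [Matrix.sub_apply, one_apply_eq, gram_apply, real_inner_self_eq_norm_sq, sub_nonneg] at this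
    exact (sq_le_one_iff₀ (norm_nonneg _)).mp this
  calc ⟪u k, w k⟫ ≤ ‖u k‖ * ‖w k‖ := real_inner_le_norm _ _
    _ ≤ ‖u k‖ := mul_le_of_le_one_right (norm_nonneg _) hwk

lemma sum_norm_mem_pairingValues {u : ι → E} (hu : Pairwise fun k l => ⟪u k, u l⟫ = 0) :
    ∑ k, ‖u k‖ ∈ pairingValues u := by
  have hunit : ∀ k, ‖u k‖⁻¹ * ‖u k‖ ^ 2 = ‖u k‖ := fun k => by
    rcases eq_or_ne ‖u k‖ 0 with h | h
    · simp [h]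
    · field_simp
  -- `‖u k‖⁻¹ = 0` when `u k = 0`, so the normalized tuple vanishes there
  refine ⟨fun k => ‖u k‖⁻¹ • u k, ?_, ?_⟩
  · have : 1 - gram ℝ (fun k => ‖u k‖⁻¹ • u k) = diagonal fun k => 1 - ‖u k‖⁻¹ * ‖u k‖ := by
      ext k l
      rcases eq_or_ne k l with rfl | hkl
      · rw [Matrix.sub_apply, one_apply_eq, gram_apply, diagonal_apply_eq, real_inner_smul_left,
          real_inner_smul_right, real_inner_self_eq_norm_sq, hunit]
      · simp [hkl, real_inner_smul_left, real_inner_smul_right, hu hkl]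
    rw [this]
    refine PosSemidef.diagonal fun k => sub_nonneg.mpr ?_
    rcases eq_or_ne ‖u k‖ 0 with h | h <;> simp [h]
  · simp [innerMatrix, trace, real_inner_smul_right, hunit]

lemma isGreatest_pairingValues_of_pairwise {u : ι → E} (hu : Pairwise fun k l => ⟪u k, u l⟫ = 0) :
    IsGreatest (pairingValues u) (∑ k, ‖u k‖) :=
  ⟨sum_norm_mem_pairingValues hu, fun _ => le_sum_norm_of_mem_pairingValues⟩

end Values

end Pairing

section Spectral

open Matrix

variable {E : Type*} [NormedAddCommGroup E] [InnerProductSpace ℝ E] {ι : Type*} [Fintype ι]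
  [DecidableEq ι]

lemma Matrix.IsHermitian.trace_cfc_real {K : Matrix ι ι ℝ} (hK : K.IsHermitian) (f : ℝ → ℝ) :
    (cfc f K).trace = ∑ k, f (hK.eigenvalues k) := by
  rw [hK.cfc_eq, IsHermitian.cfc, Unitary.conjStarAlgAut_apply, trace_mul_cycle,
    Unitary.coe_star_mul_self, Matrix.one_mul, trace_diagonal]
  rfl

lemma gram_rowCombination_star_eigenvectorUnitary {u : ι → E} (hK : (gram ℝ u).IsHermitian) :
    gram ℝ (rowCombination (star hK.eigenvectorUnitary : Matrix ι ι ℝ) u) =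
      diagonal hK.eigenvalues := by
  have := hK.conjStarAlgAut_star_eigenvectorUnitary
  rw [Unitary.conjStarAlgAut_apply] at this
  simpa [gram_rowCombination, star_eq_conjTranspose, conjTranspose_eq_transpose_of_trivial]
    using this

theorem isGreatest_pairingValues (u : ι → E) :
    IsGreatest (pairingValues u) (CFC.sqrt (gram ℝ u)).trace := by
  have hK := posSemidef_gram ℝ u
  set U := hK.isHermitian.eigenvectorUnitary
  have hdiag := gram_rowCombination_star_eigenvectorUnitary (u := u) hK.isHermitian
  set ũ := rowCombination (star U : Matrix ι ι ℝ) u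
  have hnorm : ∀ k, ‖ũ k‖ = √(hK.isHermitian.eigenvalues k) := fun k => by
    have := congr_fun₂ hdiag k k
    rw [diagonal_apply_eq, gram_apply, real_inner_self_eq_norm_sq] at this
    rw [← this, Real.sqrt_sq (norm_nonneg _)]
  have horth : Pairwise fun k l => ⟪ũ k, ũ l⟫ = 0 := fun k l hkl => by
    simpa [hkl] using congr_fun₂ hdiag k l
  rw [← pairingValues_rowCombination (Unitary.star_mem U.2), CFC.sqrt_eq_real_sqrt _ hK.nonneg,
    cfcₙ_eq_cfc, hK.isHermitian.trace_cfc_real]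
  simpa only [hnorm] using isGreatest_pairingValues_of_pairwise horth

end Spectral

section ConvexAnalysis

open Metric Filter Topology

/-- `ConvexOn ℝ univ Ψ` is unavailable: `ℝ` does not act on `EReal`. -/
def ConvexEReal {V : Type*} [AddCommGroup V] [Module ℝ V] (Ψ : V → EReal) : Prop :=
  ∀ (y z : V) (a b : ℝ), 0 ≤ a → 0 ≤ b → a + b = 1 →
    Ψ (a • y + b • z) ≤ (a : EReal) * Ψ y + (b : EReal) * Ψ z

lemma ConvexEReal.comp_linearMap {V V' : Type*} [AddCommGroup V] [Module ℝ V] [AddCommGroup V']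
    [Module ℝ V'] {Ψ : V' → EReal} (hΨ : ConvexEReal Ψ) (L : V →ₗ[ℝ] V') :
    ConvexEReal (Ψ ∘ L) := fun y z a b ha hb hab => by
  simpa only [Function.comp, map_add, map_smul] using hΨ (L y) (L z) a b ha hb hab

theorem LowerSemicontinuous.exists_forall_le' {α β : Type*} [TopologicalSpace α] [LinearOrder β]
    {f : α → β} (hf : LowerSemicontinuous f) (x₀ : α) (h : ∀ᶠ x in cocompact α, f x₀ ≤ f x) :
    ∃ x, ∀ y, f x ≤ f y := by
  obtain ⟨K, hK, hKf⟩ := hasBasis_cocompact.eventually_iff.mp h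
  obtain ⟨x, -, hx⟩ := (hf.lowerSemicontinuousOn _).exists_isMinOn (Set.insert_nonempty x₀ K)
    (hK.insert x₀)
  refine ⟨x, fun y => ?_⟩
  by_cases hy : y ∈ K
  · exact hx (Set.mem_insert_of_mem x₀ hy)
  · exact (hx (Set.mem_insert x₀ K)).trans (hKf hy)

lemma lowerSemicontinuous_half_sq_dist_add {F : Type*} [SeminormedAddCommGroup F]
    {Ψ : F → EReal} (hΨ : LowerSemicontinuous Ψ) (y : F) :
    LowerSemicontinuous fun z => ((1 / 2 * ‖y - z‖ ^ 2 : ℝ) : EReal) + Ψ z :=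
  (continuous_coe_real_ereal.comp (by fun_prop)).lowerSemicontinuous.add' hΨ fun _ =>
    EReal.continuousAt_add (Or.inl (EReal.coe_ne_top _)) (Or.inl (EReal.coe_ne_bot _))

section Normed

variable {F : Type*} [NormedAddCommGroup F] [NormedSpace ℝ F]

lemma ConvexEReal.coe_le_of_one_le_dist {Ψ : F → EReal} (hΨ : ConvexEReal Ψ) {z₀ z : F}
    {ψ₀ m : ℝ} (hz₀ : Ψ z₀ = ψ₀) (hm : ∀ x ∈ closedBall z₀ 1, (m : EReal) ≤ Ψ x)
    (hz : 1 ≤ dist z z₀) : ((ψ₀ + dist z z₀ * (m - ψ₀) : ℝ) : EReal) ≤ Ψ z := by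
  set r := dist z z₀
  have hr : 0 < r := one_pos.trans_le hz
  set t := r⁻¹
  have htr : t * r = 1 := inv_mul_cancel₀ hr.ne'
  have ht : 0 ≤ t := inv_nonneg.mpr hr.le
  have ht1 : t ≤ 1 := inv_le_one_of_one_le₀ hz
  have hmid : (1 - t) • z₀ + t • z ∈ closedBall z₀ 1 := by
    rw [mem_closedBall, dist_eq_norm, show (1 - t) • z₀ + t • z - z₀ = t • (z - z₀) by module,
      norm_smul, Real.norm_of_nonneg ht, ← dist_eq_norm, htr]
  have hconv := (hm _ hmid).trans (hΨ z₀ z (1 - t) t (sub_nonneg.mpr ht1) ht (by ring))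
  induction hΨz : Ψ z using EReal.rec with
  | bot =>
    rw [hΨz, EReal.coe_mul_bot_of_pos (inv_pos.mpr hr), EReal.add_bot] at hconv
    exact absurd hconv (EReal.coe_ne_bot m ∘ le_bot_iff.mp)
  | top => exact le_top
  | coe ψ =>
    rw [hz₀, hΨz] at hconv
    have : m ≤ (1 - t) * ψ₀ + t * ψ := by exact_mod_cast hconv
    have : r * m ≤ r * ((1 - t) * ψ₀ + t * ψ) := mul_le_mul_of_nonneg_left this hr.le
    have : r * ((1 - t) * ψ₀ + t * ψ) = r * ψ₀ - ψ₀ + ψ := by linear_combination (ψ - ψ₀) * htr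
    exact_mod_cast (by linarith : ψ₀ + r * (m - ψ₀) ≤ ψ)

lemma eventually_cocompact_half_sq_dist_add_le [ProperSpace F] {Ψ : F → EReal}
    (hΨ : ConvexEReal Ψ) {z₀ : F} {ψ₀ m : ℝ} (hz₀ : Ψ z₀ = ψ₀)
    (hm : ∀ x ∈ closedBall z₀ 1, (m : EReal) ≤ Ψ x) (y : F) :
    ∀ᶠ z in cocompact F,
      ((1 / 2 * ‖y - z₀‖ ^ 2 : ℝ) : EReal) + Ψ z₀ ≤ ((1 / 2 * ‖y - z‖ ^ 2 : ℝ) : EReal) + Ψ z := by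
  have hmψ₀ : m ≤ ψ₀ := by exact_mod_cast hz₀ ▸ hm z₀ (mem_closedBall_self zero_le_one)
  set d := ‖y - z₀‖
  filter_upwards [(isCompact_closedBall z₀ (max 1 (2 * (d + (ψ₀ - m))))).compl_mem_cocompact]
    with z hz
  set r := dist z z₀
  have hR : max 1 (2 * (d + (ψ₀ - m))) < r := by simpa using hz
  have h1 : 1 ≤ r := (le_max_left _ _).trans hR.le
  have h2 : 2 * (d + (ψ₀ - m)) ≤ r := (le_max_right _ _).trans hR.le
  have htri : r - d ≤ ‖y - z‖ := by
    have := dist_triangle z y z₀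
    rw [dist_comm z y, dist_eq_norm y z, dist_eq_norm y z₀] at this
    linarith
  have hd : 0 ≤ d := norm_nonneg _
  have hsq : (r - d) * (r - d) ≤ ‖y - z‖ * ‖y - z‖ := mul_self_le_mul_self (by linarith) htri
  calc ((1 / 2 * d ^ 2 : ℝ) : EReal) + Ψ z₀
      ≤ ((1 / 2 * ‖y - z‖ ^ 2 : ℝ) : EReal) + ((ψ₀ + r * (m - ψ₀) : ℝ) : EReal) := by
        rw [hz₀, ← EReal.coe_add, ← EReal.coe_add, EReal.coe_le_coe_iff]
        nlinarith
    _ ≤ _ := add_le_add_right (hΨ.coe_le_of_one_le_dist hz₀ hm h1) _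

theorem exists_forall_half_sq_dist_add_le [ProperSpace F] {Ψ : F → EReal}
    (hne_top : ∃ z, Ψ z ≠ ⊤) (hne_bot : ∀ z, Ψ z ≠ ⊥) (hconv : ConvexEReal Ψ)
    (hlsc : LowerSemicontinuous Ψ) (y : F) :
    ∃ z, ∃ ψ : ℝ, Ψ z = ψ ∧ ∀ z',
      ((1 / 2 * ‖y - z‖ ^ 2 : ℝ) : EReal) + Ψ z ≤ ((1 / 2 * ‖y - z'‖ ^ 2 : ℝ) : EReal) + Ψ z' := by
  obtain ⟨z₀, hz₀⟩ := hne_top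
  obtain ⟨zm, -, hzm⟩ := (hlsc.lowerSemicontinuousOn _).exists_isMinOn
    ⟨z₀, mem_closedBall_self zero_le_one⟩ (isCompact_closedBall z₀ 1)
  have hzm_top : Ψ zm ≠ ⊤ := ne_top_of_le_ne_top hz₀ (hzm (mem_closedBall_self zero_le_one))
  lift Ψ z₀ to ℝ using ⟨hz₀, hne_bot z₀⟩ with ψ₀ hψ₀
  lift Ψ zm to ℝ using ⟨hzm_top, hne_bot zm⟩ with m hm
  obtain ⟨z, hz⟩ := (lowerSemicontinuous_half_sq_dist_add hlsc y).exists_forall_le' z₀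
    (eventually_cocompact_half_sq_dist_add_le hconv hψ₀.symm (fun x hx => hm ▸ hzm hx) y)
  have hz_top : Ψ z ≠ ⊤ := fun h => by
    have := hz z₀
    rw [h, EReal.add_top_of_ne_bot (EReal.coe_ne_bot _), ← hψ₀, ← EReal.coe_add, top_le_iff] at this
    exact EReal.coe_ne_top _ this
  exact ⟨z, _, (EReal.coe_toReal hz_top (hne_bot z)).symm, hz⟩

end Normed

variable {E : Type*} [NormedAddCommGroup E] [InnerProductSpace ℝ E]

noncomputable def moreauEnvelope (Ψ : E → EReal) (y : E) : EReal :=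
  ⨅ z, ((1 / 2 * ‖y - z‖ ^ 2 : ℝ) : EReal) + Ψ z

noncomputable def fenchelConjugate (Ψ : E → EReal) (h : E) : EReal :=
  ⨆ y, ((⟪h, y⟫ : ℝ) : EReal) - Ψ y

theorem inner_sub_add_le_of_forall_le {Ψ : E → EReal} (hconv : ConvexEReal Ψ)
    (hne_bot : ∀ z, Ψ z ≠ ⊥) {y z : E} {ψ : ℝ} (hz : Ψ z = ψ)
    (hmin : ∀ z', ((1 / 2 * ‖y - z‖ ^ 2 : ℝ) : EReal) + Ψ z ≤
      ((1 / 2 * ‖y - z'‖ ^ 2 : ℝ) : EReal) + Ψ z') (y' : E) :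
    ((⟪y - z, y' - z⟫ + ψ : ℝ) : EReal) ≤ Ψ y' := by
  induction hy' : Ψ y' using EReal.rec with
  | bot => exact absurd hy' (hne_bot y')
  | top => exact le_top
  | coe ψ' =>
    set a := y - z
    set d := y' - z
    have key : ∀ t ∈ Set.Ioc (0 : ℝ) 1, ⟪a, d⟫ ≤ ψ' - ψ + t * (‖d‖ ^ 2 / 2) := by
      rintro t ⟨ht0, ht1⟩
      have h := (hmin ((1 - t) • z + t • y')).trans
        (add_le_add_right (hconv z y' (1 - t) t (sub_nonneg.mpr ht1) ht0.le (by ring)) _)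
      rw [hz, hy', show y - ((1 - t) • z + t • y') = a - t • d by module] at h
      have h' : 1 / 2 * ‖a‖ ^ 2 + ψ ≤ 1 / 2 * ‖a - t • d‖ ^ 2 + ((1 - t) * ψ + t * ψ') := by
        exact_mod_cast h
      rw [norm_sub_sq_real a, real_inner_smul_right, norm_smul, Real.norm_of_nonneg ht0.le] at h'
      have : t * ⟪a, d⟫ ≤ t * (ψ' - ψ + t * (‖d‖ ^ 2 / 2)) := by nlinarith
      exact le_of_mul_le_mul_left this ht0
    have hlim : Tendsto (fun t : ℝ => ψ' - ψ + t * (‖d‖ ^ 2 / 2)) (𝓝[>] 0) (𝓝 (ψ' - ψ)) := by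
      have : Continuous fun t : ℝ => ψ' - ψ + t * (‖d‖ ^ 2 / 2) := by fun_prop
      simpa using (this.tendsto 0).mono_left nhdsWithin_le_nhds
    have := ge_of_tendsto hlim (eventually_of_mem (Ioc_mem_nhdsGT one_pos) key)
    exact_mod_cast (by linarith : ⟪a, d⟫ + ψ ≤ ψ')

lemma fenchelConjugate_eq_of_forall_le {Ψ : E → EReal} {h z : E} {ψ : ℝ} (hz : Ψ z = ψ)
    (hsub : ∀ y, ((⟪h, y - z⟫ + ψ : ℝ) : EReal) ≤ Ψ y) :
    fenchelConjugate Ψ h = ((⟪h, z⟫ - ψ : ℝ) : EReal) := by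
  refine le_antisymm (iSup_le fun y => ?_) (le_iSup_of_le z (by rw [hz, EReal.coe_sub]))
  calc ((⟪h, y⟫ : ℝ) : EReal) - Ψ y ≤ ((⟪h, y⟫ : ℝ) : EReal) - ((⟪h, y - z⟫ + ψ : ℝ) : EReal) :=
        EReal.sub_le_sub le_rfl (hsub y)
    _ = ((⟪h, z⟫ - ψ : ℝ) : EReal) := by
        rw [← EReal.coe_sub, inner_sub_right]
        ring_nf

theorem neg_moreauEnvelope_eq_iInf [ProperSpace E] {Ψ : E → EReal}
    (hne_top : ∃ z, Ψ z ≠ ⊤) (hne_bot : ∀ z, Ψ z ≠ ⊥) (hconv : ConvexEReal Ψ)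
    (hlsc : LowerSemicontinuous Ψ) (y : E) :
    -moreauEnvelope Ψ y =
      ⨅ h, ((1 / 2 * ‖h‖ ^ 2 : ℝ) : EReal) + fenchelConjugate Ψ h - ((⟪h, y⟫ : ℝ) : EReal) := by
  obtain ⟨z, ψ, hz, hmin⟩ := exists_forall_half_sq_dist_add_le hne_top hne_bot hconv hlsc y
  have hmoreau : moreauEnvelope Ψ y = ((1 / 2 * ‖y - z‖ ^ 2 + ψ : ℝ) : EReal) :=
    le_antisymm (iInf_le_of_le z (by rw [hz, EReal.coe_add])) (le_iInf fun z' => by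
      rw [EReal.coe_add, ← hz]
      exact hmin z')
  have hconj : fenchelConjugate Ψ (y - z) = ((⟪y - z, z⟫ - ψ : ℝ) : EReal) :=
    fenchelConjugate_eq_of_forall_le hz (inner_sub_add_le_of_forall_le hconv hne_bot hz hmin)
  rw [hmoreau]
  refine le_antisymm (le_iInf fun h => ?_) (iInf_le_of_le (y - z) ?_)
  · have hconj_ge : ((⟪h, z⟫ - ψ : ℝ) : EReal) ≤ fenchelConjugate Ψ h :=
      le_iSup_of_le z (by rw [hz, EReal.coe_sub])
    have hyoung : 0 ≤ ‖h - (y - z)‖ ^ 2 := sq_nonneg _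
    rw [norm_sub_sq_real, inner_sub_right] at hyoung
    calc -((1 / 2 * ‖y - z‖ ^ 2 + ψ : ℝ) : EReal)
        ≤ ((1 / 2 * ‖h‖ ^ 2 + (⟪h, z⟫ - ψ) - ⟪h, y⟫ : ℝ) : EReal) := by
          rw [← EReal.coe_neg, EReal.coe_le_coe_iff]
          linarith
      _ ≤ _ := by
          rw [EReal.coe_sub, EReal.coe_add]
          exact EReal.sub_le_sub (add_le_add_right hconj_ge _) le_rfl
  · have : ⟪y - z, y⟫ - ⟪y - z, z⟫ = ‖y - z‖ ^ 2 := by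
      rw [← inner_sub_right, real_inner_self_eq_norm_sq]
    rw [hconj, ← EReal.coe_add, ← EReal.coe_sub, ← EReal.coe_neg, EReal.coe_le_coe_iff]
    linarith

end ConvexAnalysis

section Frobenius

open Matrix

def euclideanToMatrix (m n : Type*) : EuclideanSpace ℝ (m × n) ≃ₗ[ℝ] Matrix m n ℝ where
  toFun x := of fun i j => x (i, j)
  invFun A := WithLp.toLp 2 fun p => A p.1 p.2
  map_add' _ _ := rfl
  map_smul' _ _ := rfl
  left_inv _ := rfl
  right_inv _ := rfl

variable {n s : ℕ}

lemma frobInner_euclideanToMatrix (x y : EuclideanSpace ℝ (Fin n × Fin s)) :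
    frobInner (euclideanToMatrix _ _ x) (euclideanToMatrix _ _ y) = ⟪x, y⟫ := by
  simp only [frobInner, trace, diag, mul_apply, transpose_apply, PiLp.inner_apply,
    Fintype.sum_prod_type, euclideanToMatrix, RCLike.inner_apply, conj_trivial]
  rw [Finset.sum_comm]
  exact Finset.sum_congr rfl fun _ _ => Finset.sum_congr rfl fun _ _ => mul_comm _ _

lemma moreau_euclideanToMatrix (Ψ : Matrix (Fin n) (Fin s) ℝ → EReal)
    (y : EuclideanSpace ℝ (Fin n × Fin s)) :
    moreau Ψ (euclideanToMatrix _ _ y) = moreauEnvelope (Ψ ∘ euclideanToMatrix _ _) y := by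
  rw [moreau, moreauEnvelope, ← (euclideanToMatrix (Fin n) (Fin s)).toEquiv.iInf_comp]
  simp [← map_sub, frobInner_euclideanToMatrix]

lemma fenchelConj_euclideanToMatrix (Ψ : Matrix (Fin n) (Fin s) ℝ → EReal)
    (h : EuclideanSpace ℝ (Fin n × Fin s)) :
    fenchelConj Ψ (euclideanToMatrix _ _ h) = fenchelConjugate (Ψ ∘ euclideanToMatrix _ _) h := by
  rw [fenchelConj, fenchelConjugate, ← (euclideanToMatrix (Fin n) (Fin s)).toEquiv.iSup_comp]
  simp [frobInner_euclideanToMatrix]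

theorem neg_moreau_eq_iInf {Ψ : Matrix (Fin n) (Fin s) ℝ → EReal} (hne_top : ∃ Y, Ψ Y ≠ ⊤)
    (hne_bot : ∀ Y, Ψ Y ≠ ⊥) (hconv : ConvexEReal Ψ) (hlsc : LowerSemicontinuous Ψ)
    (Y : Matrix (Fin n) (Fin s) ℝ) :
    -moreau Ψ Y = ⨅ H, (((1 / 2) * frobInner H H : ℝ) : EReal) + fenchelConj Ψ H
      - ((frobInner H Y : ℝ) : EReal) := by
  obtain ⟨Y₀, hY₀⟩ := hne_top
  obtain ⟨y, rfl⟩ := (euclideanToMatrix (Fin n) (Fin s)).surjective Y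
  have hconv' := hconv.comp_linearMap (euclideanToMatrix (Fin n) (Fin s)).toLinearMap
  have hlsc' :=
    hlsc.comp (euclideanToMatrix (Fin n) (Fin s)).toLinearMap.continuous_of_finiteDimensional
  rw [moreau_euclideanToMatrix, neg_moreauEnvelope_eq_iInf (Ψ := Ψ ∘ euclideanToMatrix _ _)
    ⟨(euclideanToMatrix _ _).symm Y₀, by simpa using hY₀⟩ (fun _ => hne_bot _) hconv' hlsc',
    ← (euclideanToMatrix (Fin n) (Fin s)).toEquiv.iInf_comp]
  simp [fenchelConj_euclideanToMatrix, frobInner_euclideanToMatrix]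

variable {E : Type*} [NormedAddCommGroup E] [InnerProductSpace ℝ E]

lemma frobInner_innerMatrix (H : Matrix (Fin n) (Fin s) ℝ) (v : Fin n → E) (W : Fin s → E) :
    frobInner H (innerMatrix v W) = (innerMatrix (rowCombination Hᵀ v) W).trace := by
  conv_rhs => rw [← rowCombination_one W, innerMatrix_rowCombination, transpose_one, mul_one]
  rfl

theorem isGreatest_frobInner_innerMatrix (H : Matrix (Fin n) (Fin s) ℝ) (v : Fin n → E) :
    IsGreatest (Set.range fun W : {W : Fin s → E // (1 - gram W).PosSemidef} =>
      frobInner H (innerMatrix v W)) (CFC.sqrt (Hᵀ * Matrix.gram ℝ v * H)).trace := by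
  have hrange : (Set.range fun W : {W : Fin s → E // (1 - gram W).PosSemidef} =>
      frobInner H (innerMatrix v W)) = pairingValues (rowCombination Hᵀ v) := by
    ext x
    constructor
    · rintro ⟨⟨W, hW⟩, rfl⟩
      exact ⟨W, hW, (frobInner_innerMatrix H v W).symm⟩
    · rintro ⟨W, hW, rfl⟩
      exact ⟨⟨W, hW⟩, frobInner_innerMatrix H v W⟩
  simpa only [hrange, gram_rowCombination, transpose_transpose] using
    isGreatest_pairingValues (rowCombination Hᵀ v)

end Frobenius

lemma EReal.iInf_sub_coe_of_isGreatest {α : Sort*} {f : α → ℝ} {T : ℝ}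
    (hT : IsGreatest (Set.range f) T) (a : EReal) : ⨅ x, a - (f x : EReal) = a - T := by
  obtain ⟨⟨x, hx⟩, hle⟩ := hT
  exact le_antisymm (iInf_le_of_le x (by rw [hx]))
    (le_iInf fun y => EReal.sub_le_sub le_rfl (EReal.coe_le_coe_iff.mpr (hle ⟨y, rfl⟩)))

theorem moreau_kpca_duality_general
    {𝓗 : Type*} [NormedAddCommGroup 𝓗] [InnerProductSpace ℝ 𝓗]
    {n s : ℕ} (v : Fin n → 𝓗)
    (G : Matrix (Fin n) (Fin n) ℝ) (hGdef : G = Matrix.of fun i j => ⟪v i, v j⟫)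
    (Ψ : Matrix (Fin n) (Fin s) ℝ → EReal)
    (hΨ_ne_top : ∃ Y, Ψ Y ≠ ⊤) (hΨ_ne_bot : ∀ Y, Ψ Y ≠ ⊥)
    (hΨ_convex : ∀ (Y Z : Matrix (Fin n) (Fin s) ℝ) (a b : ℝ),
      0 ≤ a → 0 ≤ b → a + b = 1 →
      Ψ (a • Y + b • Z) ≤ (a : EReal) * Ψ Y + (b : EReal) * Ψ Z)
    (hΨ_lsc : LowerSemicontinuous Ψ) :
    (⨅ W : {W : Fin s → 𝓗 // ((1 : Matrix (Fin s) (Fin s) ℝ) - gram W).PosSemidef},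
        -(moreau Ψ (Matrix.of fun i j => ⟪v i, (W : Fin s → 𝓗) j⟫))) =
    (⨅ H : Matrix (Fin n) (Fin s) ℝ,
        (((1 / 2) * frobInner H H : ℝ) : EReal) + fenchelConj Ψ H
          - (((CFC.sqrt (Hᵀ * G * H)).trace : ℝ) : EReal)) := by
  subst hGdef
  calc _ = ⨅ W : {W : Fin s → 𝓗 // (1 - gram W).PosSemidef}, ⨅ H,
        (((1 / 2) * frobInner H H : ℝ) : EReal) + fenchelConj Ψ H
          - ((frobInner H (innerMatrix v W) : ℝ) : EReal) :=
        iInf_congr fun W => neg_moreau_eq_iInf hΨ_ne_top hΨ_ne_bot hΨ_convex hΨ_lsc _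
    _ = _ := by
      rw [iInf_comm]
      exact iInf_congr fun H => EReal.iInf_sub_coe_of_isGreatest
        (isGreatest_frobInner_innerMatrix H v) _

/-- Dualization of KPCA with Moreau-envelope objective `f = (1/2)‖·‖_F² □ Ψ`:
`inf { -f(ΓW) : 𝒢(W) ⪯ Iₛ } = inf_H ( (1/2)‖H‖_F² + Ψ⋆(H) - Tr √(Hᵀ G H) )`. -/
theorem moreau_kpca_duality
    {𝓗 : Type*} [NormedAddCommGroup 𝓗] [InnerProductSpace ℝ 𝓗]
    {n s : ℕ} (v : Fin n → 𝓗)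
    (G : Matrix (Fin n) (Fin n) ℝ) (hGdef : G = Matrix.of fun i j => ⟪v i, v j⟫)
    (hG : G.PosDef)
    (Ψ : Matrix (Fin n) (Fin s) ℝ → EReal)
    (hΨ_ne_top : ∃ Y, Ψ Y ≠ ⊤) (hΨ_ne_bot : ∀ Y, Ψ Y ≠ ⊥)
    (hΨ_convex : ∀ (Y Z : Matrix (Fin n) (Fin s) ℝ) (a b : ℝ),
      0 ≤ a → 0 ≤ b → a + b = 1 →
      Ψ (a • Y + b • Z) ≤ (a : EReal) * Ψ Y + (b : EReal) * Ψ Z)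
    (hΨ_lsc : LowerSemicontinuous Ψ) :
    (⨅ W : {W : Fin s → 𝓗 // ((1 : Matrix (Fin s) (Fin s) ℝ) - gram W).PosSemidef},
        -(moreau Ψ (Matrix.of fun i j => ⟪v i, (W : Fin s → 𝓗) j⟫))) =
    (⨅ H : Matrix (Fin n) (Fin s) ℝ,
        (((1 / 2) * frobInner H H : ℝ) : EReal) + fenchelConj Ψ H
          - (((CFC.sqrt (Hᵀ * G * H)).trace : ℝ) : EReal)) :=
  moreau_kpca_duality_general v G hGdef Ψ hΨ_ne_top hΨ_ne_bot hΨ_convex hΨ_lsc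
end
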